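/- Let H be the Hilbert space with orthonormal basis consisting of the vectors |j,μ,n,↑⟩ for j ∈ (1/2)ℕ, μ ∈ {−j, −j+1, …, j}, n ∈ {−j−1/2, −j+1/2, …, j+1/2}, together with the vectors |j,μ,n,↓⟩ for j ∈ (1/2)ℕ with j ≥ 1/2, μ ∈ {−j, …, j}, n ∈ {−j+1/2, …, j−1/2}. Define the conjugate-linear operator J by J|j,μ,n,↑⟩ = i^{2(2j+μ+n)}|j,−μ,−n,↑⟩ and J|j,μ,n,↓⟩ = i^{2(2j−μ−n)}|j,−μ,−n,↓⟩, and for real constants c₁↑, c₂↑, c₁↓, c₂↓ let D|j,μ,n,↑⟩ = (c₁↑ j + c₂↑)|j,μ,n,↑⟩ and D|j,μ,n,↓⟩ = (c₁↓ j + c₂↓)|j,μ,n,↓⟩. Then each exponent 4j ± 2(μ+n) is an odd integer, J is an antiunitary with J² = −1, and J D J^{−1} = D. -/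

import Mathlib

noncomputable section

/-- Validity predicate for the spinor basis labels `(J, M, N, s)` of `SU_q(2)`, where
`J = 2j ∈ ℕ`, `M = 2μ ∈ ℤ`, `N = 2n ∈ ℤ` and `s = true` for `↑`, `s = false` for `↓`:
`μ ∈ {−j, …, j}` with `μ ≡ j (mod 1)`, `n ≡ j + 1/2 (mod 1)`, and
`n ∈ {−j−1/2, …, j+1/2}` for `↑`, resp. `j ≥ 1/2`, `n ∈ {−j+1/2, …, j−1/2}` for `↓`. -/
def PSp (x : ℕ × ℤ × ℤ × Bool) : Prop :=
  -(x.1 : ℤ) ≤ x.2.1 ∧ x.2.1 ≤ (x.1 : ℤ) ∧ Even (x.2.1 + (x.1 : ℤ)) ∧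
    Odd (x.2.2.1 + (x.1 : ℤ)) ∧
    (if x.2.2.2 then -(x.1 : ℤ) - 1 ≤ x.2.2.1 ∧ x.2.2.1 ≤ (x.1 : ℤ) + 1
      else 1 ≤ (x.1 : ℤ) ∧ -(x.1 : ℤ) + 1 ≤ x.2.2.1 ∧ x.2.2.1 ≤ (x.1 : ℤ) - 1)

instance : DecidablePred PSp := fun x => by unfold PSp; infer_instance

/-- Index set of the spinor basis `|j,μ,n,↑⟩`, `|j,μ,n,↓⟩`. -/
abbrev SpIdx : Type := {x : ℕ × ℤ × ℤ × Bool // PSp x}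

/-- The spinor Hilbert space of `SU_q(2)`. -/
abbrev HSp : Type := lp (fun _ : SpIdx => ℂ) 2

/-- The basis vector `|j,μ,n,↑/↓⟩` (zero if the labels are out of range). -/
noncomputable def eSp (J : ℕ) (M N : ℤ) (s : Bool) : HSp :=
  if h : PSp (J, M, N, s) then lp.single 2 ⟨(J, M, N, s), h⟩ 1 else 0

/-- The eigenvalue `c₁↑ j + c₂↑` resp. `c₁↓ j + c₂↓` of the Dirac operator. -/
noncomputable def dSp (c1u c2u c1d c2d : ℝ) (J : ℕ) (s : Bool) : ℝ :=
  if s then c1u * ((J : ℝ) / 2) + c2u else c1d * ((J : ℝ) / 2) + c2d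

open scoped ENNReal

lemma PSp_neg {J : ℕ} {M N : ℤ} {s : Bool} (h : PSp (J, M, N, s)) :
    PSp (J, -M, -N, s) := by
  unfold PSp at h ⊢
  cases s <;>
    simp only [if_true, if_false, Bool.false_eq_true] at h ⊢ <;>
    · simp only [Int.even_iff, Int.odd_iff] at h ⊢
      omega

def flipIdx : SpIdx ≃ SpIdx where
  toFun x := ⟨(x.1.1, -x.1.2.1, -x.1.2.2.1, x.1.2.2.2), PSp_neg x.2⟩
  invFun x := ⟨(x.1.1, -x.1.2.1, -x.1.2.2.1, x.1.2.2.2), PSp_neg x.2⟩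
  left_inv x := Subtype.ext (by simp)
  right_inv x := Subtype.ext (by simp)

lemma flipIdx_flip_flip (x : SpIdx) : flipIdx (flipIdx x) = x := flipIdx.left_inv x

def ph (x : SpIdx) : ℂ :=
  if x.1.2.2.2 then Complex.I ^ (2 * (x.1.1 : ℤ) + x.1.2.1 + x.1.2.2.1)
  else Complex.I ^ (2 * (x.1.1 : ℤ) - x.1.2.1 - x.1.2.2.1)

lemma norm_ph (x : SpIdx) : ‖ph x‖ = 1 := by
  unfold ph
  split <;> rw [norm_zpow] <;> simp [Complex.norm_I]

lemma I_zpow_two_mul_odd {n : ℤ} (hn : Odd n) : Complex.I ^ (2 * n) = -1 := by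
  obtain ⟨k, rfl⟩ := hn
  have hI : (Complex.I : ℂ) ≠ 0 := Complex.I_ne_zero
  have : (2 : ℤ) * (2 * k + 1) = 4 * k + 2 := by ring
  have h4 : Complex.I ^ (4 : ℤ) = 1 := by
    rw [show (4 : ℤ) = ((4 : ℕ) : ℤ) by norm_num, zpow_natCast, Complex.I_pow_four]
  rw [this, zpow_add₀ hI, zpow_mul, h4, one_zpow, one_mul, zpow_two, Complex.I_mul_I]

def sgl (x : SpIdx) (c : ℂ) : HSp := lp.single 2 x c

lemma eSp_eq {J : ℕ} {M N : ℤ} {s : Bool} (h : PSp (J, M, N, s)) :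
    eSp J M N s = sgl ⟨(J, M, N, s), h⟩ 1 := dif_pos h

lemma ph_up {J : ℕ} {M N : ℤ} (h : PSp (J, M, N, true)) :
    ph ⟨(J, M, N, true), h⟩ = Complex.I ^ (2 * (J : ℤ) + M + N) := rfl

lemma ph_down {J : ℕ} {M N : ℤ} (h : PSp (J, M, N, false)) :
    ph ⟨(J, M, N, false), h⟩ = Complex.I ^ (2 * (J : ℤ) - M - N) := rfl

-- key lemma on singles
lemma Jop_single (Jop : HSp →SL[starRingEnd ℂ] HSp)
    (hJu : ∀ (J : ℕ) (M N : ℤ), PSp (J, M, N, true) →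
      Jop (eSp J M N true) =
        (Complex.I ^ (2 * (J : ℤ) + M + N)) • eSp J (-M) (-N) true)
    (hJd : ∀ (J : ℕ) (M N : ℤ), PSp (J, M, N, false) →
      Jop (eSp J M N false) =
        (Complex.I ^ (2 * (J : ℤ) - M - N)) • eSp J (-M) (-N) false)
    (x : SpIdx) (c : ℂ) :
    Jop (sgl x c) = sgl (flipIdx x) ((starRingEnd ℂ) c * ph x) := by
  obtain ⟨⟨J, M, N, s⟩, hx⟩ := x
  have h1 : sgl ⟨(J, M, N, s), hx⟩ c
      = c • sgl ⟨(J, M, N, s), hx⟩ (1 : ℂ) := by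
    rw [sgl, sgl, ← lp.single_smul, smul_eq_mul, mul_one]
  have hbase : Jop (sgl ⟨(J, M, N, s), hx⟩ (1 : ℂ))
      = ph ⟨(J, M, N, s), hx⟩ • sgl (flipIdx ⟨(J, M, N, s), hx⟩) 1 := by
    cases s
    · have := hJd J M N hx
      rw [eSp_eq hx, eSp_eq (PSp_neg hx)] at this
      exact this
    · have := hJu J M N hx
      rw [eSp_eq hx, eSp_eq (PSp_neg hx)] at this
      exact this
  rw [h1, map_smulₛₗ, hbase, smul_smul]
  show _ = sgl _ _
  rw [sgl, sgl, ← lp.single_smul, smul_eq_mul, mul_one]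

def Jfun (f : HSp) : SpIdx → ℂ :=
  fun y => ph (flipIdx y) * (starRingEnd ℂ) (f (flipIdx y))

lemma norm_Jfun (f : HSp) (y : SpIdx) : ‖Jfun f y‖ = ‖f (flipIdx y)‖ := by
  unfold Jfun
  rw [norm_mul, norm_ph, one_mul]
  exact RCLike.norm_conj _

lemma memJ (f : HSp) : Memℓp (Jfun f) 2 := by
  apply memℓp_gen
  have hs : Summable (fun i : SpIdx => ‖f i‖ ^ (2 : ℝ≥0∞).toReal) :=
    (lp.memℓp f).summable (by norm_num)
  have hs2 : Summable ((fun i : SpIdx => ‖f i‖ ^ (2 : ℝ≥0∞).toReal) ∘ flipIdx) :=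
    (flipIdx.summable_iff).2 hs
  refine hs2.congr fun y => ?_
  simp only [Function.comp_apply, norm_Jfun]

def Jg (f : HSp) : HSp := ⟨Jfun f, memJ f⟩

lemma Jg_apply (f : HSp) (y : SpIdx) :
    (Jg f : ∀ _ : SpIdx, ℂ) y = ph (flipIdx y) * (starRingEnd ℂ) (f (flipIdx y)) := rfl

lemma Jop_eq_Jg (Jop : HSp →SL[starRingEnd ℂ] HSp)
    (hJu : ∀ (J : ℕ) (M N : ℤ), PSp (J, M, N, true) →
      Jop (eSp J M N true) =
        (Complex.I ^ (2 * (J : ℤ) + M + N)) • eSp J (-M) (-N) true)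
    (hJd : ∀ (J : ℕ) (M N : ℤ), PSp (J, M, N, false) →
      Jop (eSp J M N false) =
        (Complex.I ^ (2 * (J : ℤ) - M - N)) • eSp J (-M) (-N) false)
    (f : HSp) : Jop f = Jg f := by
  have h1 : HasSum (fun x : SpIdx => Jop (lp.single 2 x (f x))) (Jop f) :=
    (lp.hasSum_single (by norm_num) f).mapL Jop
  have h2 : HasSum (fun y : SpIdx => lp.single 2 y ((Jg f : ∀ _ : SpIdx, ℂ) y)) (Jg f) :=
    lp.hasSum_single (by norm_num) (Jg f)
  have h3 : HasSum ((fun y : SpIdx => lp.single 2 y ((Jg f : ∀ _ : SpIdx, ℂ) y)) ∘ flipIdx)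
      (Jg f) := (flipIdx.hasSum_iff).2 h2
  refine h1.unique ?_
  convert h3 using 1
  funext x
  simp only [Function.comp_apply]
  show Jop (sgl x ((f : ∀ _ : SpIdx, ℂ) x)) = _
  rw [Jop_single Jop hJu hJd, Jg_apply, flipIdx_flip_flip, mul_comm]
  rfl

lemma mul_ph (y : SpIdx) : ph (flipIdx y) * (starRingEnd ℂ) (ph y) = -1 := by
  obtain ⟨⟨J, M, N, s⟩, h⟩ := y
  have hI : (Complex.I : ℂ) ≠ 0 := Complex.I_ne_zero
  have hodd : Odd (M + N) := by
    obtain ⟨-, -, hM, hN, -⟩ := h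
    simp only [Int.even_iff, Int.odd_iff] at hM hN ⊢
    omega
  have hconj : ∀ n : ℤ, (starRingEnd ℂ) (Complex.I ^ n) = Complex.I ^ (-n) := by
    intro n
    rw [map_zpow₀, Complex.conj_I, ← Complex.inv_I, inv_zpow, ← zpow_neg]
  cases s
  · show Complex.I ^ (2 * (J : ℤ) - -M - -N) * (starRingEnd ℂ) (Complex.I ^ (2 * (J : ℤ) - M - N)) = -1
    rw [hconj, ← zpow_add₀ hI]
    rw [show 2 * (J : ℤ) - -M - -N + -(2 * (J : ℤ) - M - N) = 2 * (M + N) by ring]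
    exact I_zpow_two_mul_odd hodd
  · show Complex.I ^ (2 * (J : ℤ) + -M + -N) * (starRingEnd ℂ) (Complex.I ^ (2 * (J : ℤ) + M + N)) = -1
    rw [hconj, ← zpow_add₀ hI]
    rw [show 2 * (J : ℤ) + -M + -N + -(2 * (J : ℤ) + M + N) = 2 * (-(M + N)) by ring]
    exact I_zpow_two_mul_odd hodd.neg

lemma norm_Jg (f : HSp) : ‖Jg f‖ = ‖f‖ := by
  have hp : 0 < (2 : ℝ≥0∞).toReal := by norm_num
  rw [lp.norm_eq_tsum_rpow hp, lp.norm_eq_tsum_rpow hp]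
  congr 1
  rw [← flipIdx.tsum_eq (fun i => ‖(f : ∀ _ : SpIdx, ℂ) i‖ ^ (2 : ℝ≥0∞).toReal)]
  exact tsum_congr fun y => by rw [show ‖(Jg f : ∀ _ : SpIdx, ℂ) y‖ = ‖(f : ∀ _ : SpIdx, ℂ) (flipIdx y)‖ from norm_Jfun f y]

lemma Jg_Jg (f : HSp) : Jg (Jg f) = -f := by
  apply lp.ext
  funext y
  show Jfun (Jg f) y = -((f : ∀ _ : SpIdx, ℂ) y)
  show ph (flipIdx y) * (starRingEnd ℂ) ((Jg f : ∀ _ : SpIdx, ℂ) (flipIdx y)) = _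
  rw [Jg_apply, flipIdx_flip_flip, map_mul, Complex.conj_conj, ← mul_assoc, mul_ph]
  simp

/-- For the reality operator `J|jμn↑⟩ = i^{2(2j+μ+n)}|j,−μ,−n,↑⟩`,
`J|jμn↓⟩ = i^{2(2j−μ−n)}|j,−μ,−n,↓⟩` on the spinor space of `SU_q(2)` and the diagonal
Dirac operator with eigenvalues `c₁↑ j + c₂↑`, `c₁↓ j + c₂↓`: each exponent `4j ± 2(μ+n)`
is an odd integer, `J` is an antiunitary with `J² = −1`, and `J D J⁻¹ = D` (on finitely
supported vectors). -/
theorem suq2_spinor_real_structure (c1u c2u c1d c2d : ℝ)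
    (Jop : HSp →SL[starRingEnd ℂ] HSp) (D : HSp →ₗ[ℂ] HSp)
    (hJu : ∀ (J : ℕ) (M N : ℤ), PSp (J, M, N, true) →
      Jop (eSp J M N true) =
        (Complex.I ^ (2 * (J : ℤ) + M + N)) • eSp J (-M) (-N) true)
    (hJd : ∀ (J : ℕ) (M N : ℤ), PSp (J, M, N, false) →
      Jop (eSp J M N false) =
        (Complex.I ^ (2 * (J : ℤ) - M - N)) • eSp J (-M) (-N) false)
    (hD : ∀ (J : ℕ) (M N : ℤ) (s : Bool), PSp (J, M, N, s) →
      D (eSp J M N s) = ((dSp c1u c2u c1d c2d J s : ℝ) : ℂ) • eSp J M N s) :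
    (∀ (J : ℕ) (M N : ℤ) (s : Bool), PSp (J, M, N, s) →
      Odd (2 * (J : ℤ) + M + N) ∧ Odd (2 * (J : ℤ) - M - N)) ∧
    (∀ v : HSp, ‖Jop v‖ = ‖v‖) ∧
    Function.Bijective Jop ∧
    (∀ v : HSp, Jop (Jop v) = -v) ∧
    (∀ (J : ℕ) (M N : ℤ) (s : Bool), PSp (J, M, N, s) →
      D (Jop (eSp J M N s)) = Jop (D (eSp J M N s))) := by
  have hJg : ∀ v : HSp, Jop v = Jg v := Jop_eq_Jg Jop hJu hJd
  have hJJ : ∀ v : HSp, Jop (Jop v) = -v := by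
    intro v
    rw [hJg, hJg, Jg_Jg]
  refine ⟨?_, ?_, ?_, hJJ, ?_⟩
  · intro J M N s h
    obtain ⟨-, -, hM, hN, -⟩ := h
    constructor <;>
      · simp only [Int.even_iff, Int.odd_iff] at hM hN ⊢
        omega
  · intro v
    rw [hJg, norm_Jg]
  · constructor
    · intro v w hvw
      have := congrArg Jop hvw
      rw [hJJ, hJJ] at this
      exact neg_injective this
    · intro v
      exact ⟨Jop (-v), by rw [hJJ, neg_neg]⟩
  · intro J M N s h
    have hd : (starRingEnd ℂ) ((dSp c1u c2u c1d c2d J s : ℝ) : ℂ)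
        = ((dSp c1u c2u c1d c2d J s : ℝ) : ℂ) := Complex.conj_ofReal _
    cases s
    · rw [hD _ _ _ _ h, map_smulₛₗ, hJd _ _ _ h, map_smul, hD _ _ _ _ (PSp_neg h),
        hd, smul_smul, smul_smul, mul_comm]
    · rw [hD _ _ _ _ h, map_smulₛₗ, hJu _ _ _ h, map_smul, hD _ _ _ _ (PSp_neg h),
        hd, smul_smul, smul_smul, mul_comm]


end
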